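/- Define w_n = min{ t ≥ 1 : e'_t ≥ n } for n ≥ 1, where e'_t = b_1 + b_2 + ⋯ + b_t is the ending position of the t'th run of (d'_k)_{k≥1}. Then w_1 = 1 and, for all n ≥ 1, w_{2n} = w_{2n−1} + (w_n mod 2) and w_{2n+1} = w_{2n} + 1. -/

import Mathlib

/-- `e` enumerates the ending positions of the runs of the sequence `s`
(whose terms are `s 1, s 2, s 3, …`; the value `s 0` is irrelevant).
A run is a maximal block of consecutive identical values; the `n`'th run
(`n ≥ 1`) occupies positions `e (n-1) + 1, …, e n`. -/
def IsRunEnds {α : Type*} (s : ℕ → α) (e : ℕ → ℕ) : Prop :=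
  e 0 = 0 ∧ StrictMono e ∧
    (∀ n, 1 ≤ n → ∀ i, e (n - 1) < i → i ≤ e n → s i = s (e n)) ∧
    (∀ n, 1 ≤ n → s (e n) ≠ s (e n + 1))

/-- The regular paperfolding sequence over `{0,1}`: `q 0 = 0`,
`q (2n) = q n` for `n ≥ 1`, `q (4n+1) = 0` and `q (4n+3) = 1` for `n ≥ 0`. -/
def IsRegularPaperfolding (q : ℕ → ℕ) : Prop :=
  (∀ n, q n = 0 ∨ q n = 1) ∧ q 0 = 0 ∧
    (∀ n, 1 ≤ n → q (2 * n) = q n) ∧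
    (∀ n, q (4 * n + 1) = 0) ∧ (∀ n, q (4 * n + 3) = 1)

/-- The first difference sequence `d` of `q`: `d 1 = 1` and
`d n = q n - q (n-1)` for `n ≥ 2`. (The value at `0` is irrelevant.) -/
def dseq (q : ℕ → ℕ) (n : ℕ) : ℤ :=
  if n = 1 then 1 else (q n : ℤ) - (q (n - 1) : ℤ)

/-- `d' n = |d n|`, as a natural number. -/
def dabs (q : ℕ → ℕ) (n : ℕ) : ℕ := (dseq q n).natAbs


/-!
Let `runIndex e n` be the index of the run containing position `n`, so that `w = runIndex e`.
It grows by one exactly where `d'` changes value; as `d'` is `0/1`-valued with `d'₁ = 1`, this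
gives `d'ₙ = wₙ mod 2`. For the paperfolding sequence the odd-indexed terms alternate,
`q (2n+1) ≠ q (2n-1)`, so `d'` always changes between positions `2n` and `2n+1`; and since
`q (2n) = q n`, `q (2n-2) = q (n-1)`, it changes between `2n-1` and `2n` exactly when `d'ₙ = 1`.
-/

noncomputable def runIndex (e : ℕ → ℕ) (n : ℕ) : ℕ := sInf {t : ℕ | 1 ≤ t ∧ n ≤ e t}

lemma sum_Icc_one_sub_eq {e : ℕ → ℕ} (hmono : Monotone e) (h0 : e 0 = 0) (t : ℕ) :
    ∑ i ∈ Finset.Icc 1 t, (e i - e (i - 1)) = e t := by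
  rw [← Finset.Ico_add_one_right_eq_Icc, Finset.sum_Ico_eq_sum_range]
  simpa [add_comm 1, h0] using Finset.sum_range_tsub hmono t

section RunIndex

variable {e : ℕ → ℕ}

lemma runIndex_eq_succ_iff (hmono : Monotone e) (h0 : e 0 = 0) {n : ℕ} (hn : 1 ≤ n) (t : ℕ) :
    runIndex e n = t + 1 ↔ e t < n ∧ n ≤ e (t + 1) := by
  have hup : ∀ t₁ t₂, t₁ ≤ t₂ →
      t₁ ∈ {t : ℕ | 1 ≤ t ∧ n ≤ e t} → t₂ ∈ {t : ℕ | 1 ≤ t ∧ n ≤ e t} :=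
    fun t₁ t₂ h ⟨h1, h2⟩ => ⟨h1.trans h, h2.trans (hmono h)⟩
  rw [runIndex, Nat.sInf_upward_closed_eq_succ_iff hup]
  simp only [Set.mem_ofPred_eq]
  rcases t with _ | t
  · rw [h0]; omega
  · omega

lemma exists_runIndex_eq_succ (hmono : StrictMono e) (h0 : e 0 = 0) {n : ℕ} (hn : 1 ≤ n) :
    ∃ t, runIndex e n = t + 1 ∧ e t < n ∧ n ≤ e (t + 1) := by
  have hmem : runIndex e n ∈ {t : ℕ | 1 ≤ t ∧ n ≤ e t} := Nat.sInf_mem ⟨n, hn, hmono.le_apply⟩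
  obtain ⟨t, ht⟩ := Nat.exists_eq_add_of_le' hmem.1
  exact ⟨t, ht, (runIndex_eq_succ_iff hmono.monotone h0 hn t).1 ht⟩

end RunIndex

namespace IsRunEnds

variable {α : Type*} {s : ℕ → α} {e : ℕ → ℕ}

lemma apply_eq_of_mem_run (he : IsRunEnds s e) {t i : ℕ} (hlo : e t < i) (hhi : i ≤ e (t + 1)) :
    s i = s (e (t + 1)) :=
  he.2.2.1 (t + 1) (Nat.le_add_left 1 t) i hlo hhi

lemma runIndex_succ_of_eq (he : IsRunEnds s e) {n : ℕ} (hn : 1 ≤ n) (hs : s (n + 1) = s n) :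
    runIndex e (n + 1) = runIndex e n := by
  obtain ⟨t, ht, hlo, hhi⟩ := exists_runIndex_eq_succ he.2.1 he.1 hn
  have hlt : n < e (t + 1) := by
    refine hhi.lt_of_ne fun hend => he.2.2.2 (t + 1) (Nat.le_add_left 1 t) ?_
    rw [← hend, hs]
  rw [ht, runIndex_eq_succ_iff he.2.1.monotone he.1 (by omega)]
  omega

lemma runIndex_succ_of_ne (he : IsRunEnds s e) {n : ℕ} (hn : 1 ≤ n) (hs : s (n + 1) ≠ s n) :
    runIndex e (n + 1) = runIndex e n + 1 := by
  obtain ⟨t, ht, hlo, hhi⟩ := exists_runIndex_eq_succ he.2.1 he.1 hn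
  have hend : n = e (t + 1) := by
    by_contra hne
    exact hs ((he.apply_eq_of_mem_run (by omega) (by omega)).trans
      (he.apply_eq_of_mem_run hlo hhi).symm)
  have hnext : e (t + 1) < e (t + 1 + 1) := he.2.1 (Nat.lt_add_one _)
  rw [ht, runIndex_eq_succ_iff he.2.1.monotone he.1 (by omega)]
  omega

lemma runIndex_one (he : IsRunEnds s e) : runIndex e 1 = 1 := by
  have h0 : e 0 = 0 := he.1
  have h01 : e 0 < e 1 := he.2.1 Nat.zero_lt_one
  rw [runIndex_eq_succ_iff he.2.1.monotone h0 le_rfl 0, zero_add]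
  omega

lemma apply_eq_runIndex_mod_two {s : ℕ → ℕ} (he : IsRunEnds s e) (hs : ∀ n, s n ≤ 1)
    (hs1 : s 1 = 1) {n : ℕ} (hn : 1 ≤ n) : s n = runIndex e n % 2 := by
  induction n, hn using Nat.le_induction with
  | base => rw [hs1, he.runIndex_one]
  | succ n hn ih =>
    by_cases hsn : s (n + 1) = s n
    · rw [he.runIndex_succ_of_eq hn hsn, hsn, ih]
    · have := hs n; have := hs (n + 1)
      rw [he.runIndex_succ_of_ne hn hsn]
      omega

end IsRunEnds

lemma dabs_one (q : ℕ → ℕ) : dabs q 1 = 1 := rfl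

lemma dabs_of_ne_one (q : ℕ → ℕ) {n : ℕ} (hn : n ≠ 1) :
    dabs q n = ((q n : ℤ) - q (n - 1)).natAbs := by
  simp [dabs, dseq, hn]

namespace IsRegularPaperfolding

variable {q : ℕ → ℕ}

lemma le_one (hq : IsRegularPaperfolding q) (n : ℕ) : q n ≤ 1 := by
  rcases hq.1 n with h | h <;> omega

lemma dabs_le_one (hq : IsRegularPaperfolding q) (n : ℕ) : dabs q n ≤ 1 := by
  by_cases hn : n = 1
  · rw [hn, dabs_one]
  · have := hq.le_one n; have := hq.le_one (n - 1)
    rw [dabs_of_ne_one q hn]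
    omega

lemma apply_two_mul_add_one_ne (hq : IsRegularPaperfolding q) {n : ℕ} (hn : 1 ≤ n) :
    q (2 * n + 1) ≠ q (2 * n - 1) := by
  obtain ⟨m, rfl | rfl⟩ := Nat.even_or_odd' n
  · rw [show 2 * (2 * m) + 1 = 4 * m + 1 by ring, show 2 * (2 * m) - 1 = 4 * (m - 1) + 3 by omega,
      hq.2.2.2.1, hq.2.2.2.2]
    decide
  · rw [show 2 * (2 * m + 1) + 1 = 4 * m + 3 by ring, show 2 * (2 * m + 1) - 1 = 4 * m + 1 by omega,
      hq.2.2.2.1, hq.2.2.2.2]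
    decide

lemma dabs_two_mul_add_one_ne (hq : IsRegularPaperfolding q) {n : ℕ} (hn : 1 ≤ n) :
    dabs q (2 * n + 1) ≠ dabs q (2 * n) := by
  have hodd := hq.apply_two_mul_add_one_ne hn
  have := hq.le_one (2 * n + 1); have := hq.le_one (2 * n); have := hq.le_one (2 * n - 1)
  rw [dabs_of_ne_one q (by omega), dabs_of_ne_one q (by omega), Nat.add_sub_cancel]
  omega

lemma dabs_two_mul_eq_iff (hq : IsRegularPaperfolding q) {n : ℕ} (hn : 1 ≤ n) :
    dabs q (2 * n) = dabs q (2 * n - 1) ↔ dabs q n = 0 := by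
  obtain rfl | hn2 := hn.eq_or_lt
  · have h21 : q 2 = q 1 := hq.2.2.1 1 le_rfl
    simp [dabs_one, dabs_of_ne_one q (show 2 ≠ 1 by decide), h21]
  · have h2n : q (2 * n) = q n := hq.2.2.1 n hn
    have h2n2 : q (2 * n - 1 - 1) = q (n - 1) := by
      rw [show 2 * n - 1 - 1 = 2 * (n - 1) by omega]
      exact hq.2.2.1 (n - 1) (by omega)
    have := hq.le_one n; have := hq.le_one (n - 1); have := hq.le_one (2 * n - 1)
    rw [dabs_of_ne_one q (by omega), dabs_of_ne_one q (by omega), dabs_of_ne_one q (by omega),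
      h2n, h2n2]
    omega

end IsRegularPaperfolding

/-- with `e' t = b 1 + ⋯ + b t` (the ending position of the
`t`'th run of `(d'_k)_{k≥1}`) and `w n = min { t ≥ 1 : e' t ≥ n }`,
one has `w 1 = 1`, `w (2n) = w (2n-1) + (w n mod 2)` and
`w (2n+1) = w (2n) + 1` for all `n ≥ 1`. -/
theorem cloitre_w_recurrence
    (q : ℕ → ℕ) (hq : IsRegularPaperfolding q)
    (e : ℕ → ℕ) (he : IsRunEnds (dabs q) e)
    (b : ℕ → ℕ) (hb : ∀ n, 1 ≤ n → b n = e n - e (n - 1))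
    (w : ℕ → ℕ)
    (hw : ∀ n, 1 ≤ n → w n = sInf {t : ℕ | 1 ≤ t ∧ n ≤ ∑ i ∈ Finset.Icc 1 t, b i}) :
    w 1 = 1 ∧
      ∀ n, 1 ≤ n → w (2 * n) = w (2 * n - 1) + w n % 2 ∧
        w (2 * n + 1) = w (2 * n) + 1 := by
  have hsum : ∀ t, ∑ i ∈ Finset.Icc 1 t, b i = e t := fun t => by
    rw [Finset.sum_congr rfl fun i hi => hb i (Finset.mem_Icc.1 hi).1]
    exact sum_Icc_one_sub_eq he.2.1.monotone he.1 t
  have hw_eq : ∀ n, 1 ≤ n → w n = runIndex e n := fun n hn => by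
    simp only [hw n hn, hsum, runIndex]
  refine ⟨(hw_eq 1 le_rfl).trans he.runIndex_one, fun n hn => ⟨?_, ?_⟩⟩
  · have hpar : dabs q n = w n % 2 := by
      rw [hw_eq n hn]
      exact he.apply_eq_runIndex_mod_two hq.dabs_le_one (dabs_one q) hn
    have hstep := hq.dabs_two_mul_eq_iff hn
    obtain ⟨k, hk⟩ : ∃ k, 2 * n = k + 1 := ⟨2 * n - 1, by omega⟩
    rw [show 2 * n - 1 = k by omega, hk] at hstep ⊢
    rw [hw_eq _ (by omega), hw_eq _ (by omega)]
    by_cases hn0 : dabs q n = 0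
    · rw [he.runIndex_succ_of_eq (by omega) (hstep.2 hn0), ← hpar, hn0, add_zero]
    · have hn1 : dabs q n = 1 := by have := hq.dabs_le_one n; omega
      rw [he.runIndex_succ_of_ne (by omega) (mt hstep.1 hn0), ← hpar, hn1]
  · rw [hw_eq _ (by omega), hw_eq _ (by omega)]
    exact he.runIndex_succ_of_ne (by omega) (hq.dabs_two_mul_add_one_ne hn)
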